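/- Let (G, G⁺, u) be a partially ordered abelian group with order unit u such that G ≅ G ⊗ ℚ, and let H ≤ G be a maximally singular subgroup. Equip G₀ = G/H with the quotient cone G₀⁺ = {x + H : ∃ y ∈ H with x + y ∈ G⁺}. Then (G₀, G₀⁺) is totally ordered: for every x ∈ G, either x + H ∈ G₀⁺ or −x + H ∈ G₀⁺. -/

import Mathlib

/-!
If neither `x + H` nor `-x + H` lies in the quotient cone, then `H + ℤx` is still singular:
a positive element `h + k • x` with `k ≠ 0` could be divided by `|k|` to put `±x + H` in the
cone, provided `H` is closed under division by positive integers. That closure property itself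
follows from maximality, since the preimage of the torsion of `G ⧸ H` is again singular in the
torsion-free group `G`. Maximality then forces `x ∈ H`, so `x + H` is the image of `0 ∈ G⁺`.
-/

section

variable {G : Type*} [AddCommGroup G] [Module ℚ G] {P : Set G} {H : AddSubgroup G}

def IsSingular (P : Set G) (H : AddSubgroup G) : Prop :=
  ∀ a ∈ H, a ∈ P → a = 0

variable (hsmul : ∀ q : ℚ, 0 ≤ q → ∀ a ∈ P, q • a ∈ P)
include hsmul

theorem IsSingular.comap_torsion (hH : IsSingular P H) :
    IsSingular P ((AddCommGroup.torsion (G ⧸ H)).comap (QuotientAddGroup.mk' H)) := by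
  intro a ha hPa
  obtain ⟨n, hn, hna⟩ := isOfFinAddOrder_iff_nsmul_eq_zero.mp ha
  have hnaH : n • a ∈ H := by
    rwa [QuotientAddGroup.mk'_apply, ← QuotientAddGroup.mk_nsmul,
      QuotientAddGroup.eq_zero_iff] at hna
  have := IsAddTorsionFree.of_module_rat G
  exact (nsmul_eq_zero_iff_right hn.ne').mp
    (hH _ hnaH (by simpa only [Nat.cast_smul_eq_nsmul] using hsmul n n.cast_nonneg a hPa))

theorem mem_of_nsmul_mem_of_isSingular_maximal (hH : IsSingular P H)
    (hmax : ∀ H' : AddSubgroup G, IsSingular P H' → H ≤ H' → H' = H)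
    {n : ℕ} {g : G} (hn : n ≠ 0) (hg : n • g ∈ H) : g ∈ H := by
  have hle : H ≤ (AddCommGroup.torsion (G ⧸ H)).comap (QuotientAddGroup.mk' H) := fun a ha ↦ by
    simp [(QuotientAddGroup.eq_zero_iff a).mpr ha]
  rw [← hmax _ (hH.comap_torsion hsmul) hle]
  refine isOfFinAddOrder_iff_nsmul_eq_zero.mpr ⟨n, Nat.pos_of_ne_zero hn, ?_⟩
  rwa [QuotientAddGroup.mk'_apply, ← QuotientAddGroup.mk_nsmul, QuotientAddGroup.eq_zero_iff]

variable (hdiv : ∀ {n : ℕ} {g : G}, n ≠ 0 → n • g ∈ H → g ∈ H)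
include hdiv

theorem exists_add_mem_of_nsmul_add_mem {n : ℕ} (hn : n ≠ 0) {z h : G} (hh : h ∈ H)
    (hz : n • z + h ∈ P) : ∃ y ∈ H, z + y ∈ P := by
  have hnQ : (n : ℚ) ≠ 0 := Nat.cast_ne_zero.mpr hn
  refine ⟨(n : ℚ)⁻¹ • h, hdiv hn ?_, ?_⟩
  · rwa [← Nat.cast_smul_eq_nsmul ℚ, smul_inv_smul₀ hnQ]
  · have := hsmul (n : ℚ)⁻¹ (by positivity) _ hz
    rwa [smul_add, ← Nat.cast_smul_eq_nsmul ℚ, inv_smul_smul₀ hnQ] at this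

theorem IsSingular.sup_zmultiples (hH : IsSingular P H) {x : G}
    (hx : ∀ y ∈ H, x + y ∉ P) (hnx : ∀ y ∈ H, -x + y ∉ P) :
    IsSingular P (H ⊔ AddSubgroup.zmultiples x) := by
  intro a ha hPa
  obtain ⟨h, hh, _, hk, rfl⟩ := AddSubgroup.mem_sup.mp ha
  obtain ⟨k, rfl⟩ := AddSubgroup.mem_zmultiples_iff.mp hk
  rw [add_comm] at hPa
  rcases eq_or_ne k 0 with rfl | hk0
  · rw [zero_smul, zero_add] at hPa
    simpa using hH h hh hPa
  exfalso
  obtain ⟨n, rfl | rfl⟩ := Int.eq_nat_or_neg k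
  · have hn : n ≠ 0 := by omega
    rw [natCast_zsmul] at hPa
    obtain ⟨y, hy, hyP⟩ := exists_add_mem_of_nsmul_add_mem hsmul hdiv hn hh hPa
    exact hx y hy hyP
  · have hn : n ≠ 0 := by omega
    rw [neg_smul, natCast_zsmul, ← smul_neg] at hPa
    obtain ⟨y, hy, hyP⟩ := exists_add_mem_of_nsmul_add_mem hsmul hdiv hn hh hPa
    exact hnx y hy hyP

end

theorem stmt_3_general {G : Type*} [AddCommGroup G] [Module ℚ G]
    (Gpos : Set G)
    (hzero : (0 : G) ∈ Gpos)
    (hsmul : ∀ q : ℚ, 0 ≤ q → ∀ a ∈ Gpos, q • a ∈ Gpos)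
    (H : AddSubgroup G)
    (hsing : ∀ a ∈ H, a ∈ Gpos → a = 0)
    (hmax : ∀ H' : AddSubgroup G, (∀ a ∈ H', a ∈ Gpos → a = 0) → H ≤ H' → H' = H)
    (Q : Set (G ⧸ H))
    (hQ : Q = {ξ : G ⧸ H | ∃ x : G, QuotientAddGroup.mk x = ξ ∧ ∃ y ∈ H, x + y ∈ Gpos}) :
    ∀ x : G, (QuotientAddGroup.mk x : G ⧸ H) ∈ Q ∨
      (QuotientAddGroup.mk (-x) : G ⧸ H) ∈ Q := by
  subst hQ
  intro x
  by_contra! hc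
  have hx : ∀ y ∈ H, x + y ∉ Gpos := fun y hy hyP ↦ hc.1 ⟨x, rfl, y, hy, hyP⟩
  have hnx : ∀ y ∈ H, -x + y ∉ Gpos := fun y hy hyP ↦ hc.2 ⟨-x, rfl, y, hy, hyP⟩
  have hdiv : ∀ {n : ℕ} {g : G}, n ≠ 0 → n • g ∈ H → g ∈ H :=
    mem_of_nsmul_mem_of_isSingular_maximal hsmul hsing hmax
  have hsup := hmax _ (IsSingular.sup_zmultiples hsmul hdiv hsing hx hnx) le_sup_left
  have hxH : x ∈ H := hsup ▸ AddSubgroup.mem_sup_right (AddSubgroup.mem_zmultiples x)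
  exact hx (-x) (H.neg_mem hxH) (by rwa [add_neg_cancel])

/-- the quotient of a ℚ-ordered group with order unit by a maximally
singular subgroup, equipped with the quotient cone, is totally ordered. -/
theorem stmt_3 {G : Type*} [AddCommGroup G] [Module ℚ G]
    (Gpos : Set G)
    (hzero : (0 : G) ∈ Gpos)
    (hadd : ∀ a ∈ Gpos, ∀ b ∈ Gpos, a + b ∈ Gpos)
    (hpointed : ∀ a : G, a ∈ Gpos → -a ∈ Gpos → a = 0)
    (hsmul : ∀ q : ℚ, 0 ≤ q → ∀ a ∈ Gpos, q • a ∈ Gpos)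
    (u : G) (hu : u ∈ Gpos)
    (hunit : ∀ x : G, ∃ n : ℕ, n • u - x ∈ Gpos)
    (H : AddSubgroup G)
    (hsing : ∀ a ∈ H, a ∈ Gpos → a = 0)
    (hmax : ∀ H' : AddSubgroup G, (∀ a ∈ H', a ∈ Gpos → a = 0) → H ≤ H' → H' = H)
    (Q : Set (G ⧸ H))
    (hQ : Q = {ξ : G ⧸ H | ∃ x : G, QuotientAddGroup.mk x = ξ ∧ ∃ y ∈ H, x + y ∈ Gpos}) :
    ∀ x : G, (QuotientAddGroup.mk x : G ⧸ H) ∈ Q ∨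
      (QuotientAddGroup.mk (-x) : G ⧸ H) ∈ Q :=
  stmt_3_general Gpos hzero hsmul H hsing hmax Q hQ
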